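/- Let φ be the morphism on the alphabet {0, 1, 0', −1} defined by φ(0) = 0 1 0' −1, φ(1) = 0 1 −1 1, φ(0') = 0' −1 0 1, φ(−1) = 0' −1 1 −1, and let ζ be the morphism on the same alphabet defined by ζ(0) = ζ(0') = 0 1 0' −1, ζ(1) = 0 1 −1 1 0' −1, ζ(−1) = 1 −1. Then φ^n ∘ ζ = ζ^{n+1} for all integers n ≥ 0. -/
import Mathlib


/-- The morphism `φ` on the alphabet `{0, 1, 0', -1}`, encoded as `Fin 4` with
`0 ↦ 0`, `1 ↦ 1`, `0' ↦ 2`, `-1 ↦ 3`. -/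
def phi : Fin 4 → List (Fin 4)
  | 0 => [0, 1, 2, 3]
  | 1 => [0, 1, 3, 1]
  | 2 => [2, 3, 0, 1]
  | 3 => [2, 3, 1, 3]

/-- The morphism `ζ` with `ζ(0) = ζ(0') = 0 1 0' -1`, `ζ(1) = 0 1 -1 1 0' -1`,
`ζ(-1) = 1 -1` (same encoding). -/
def zeta : Fin 4 → List (Fin 4)
  | 0 => [0, 1, 2, 3]
  | 1 => [0, 1, 3, 1, 2, 3]
  | 2 => [0, 1, 2, 3]
  | 3 => [1, 3]

/-- Extension of a map on letters to a morphism on words. -/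
def ext (h : Fin 4 → List (Fin 4)) : List (Fin 4) → List (Fin 4) :=
  fun l => l.flatMap h

lemma ext_cons (h : Fin 4 → List (Fin 4)) (a : Fin 4) (l : List (Fin 4)) :
    ext h (a :: l) = h a ++ ext h l := by
  simp [ext]

lemma ext_append (h : Fin 4 → List (Fin 4)) (x y : List (Fin 4)) :
    ext h (x ++ y) = ext h x ++ ext h y := by
  simp [ext]

lemma key (l : List (Fin 4)) : ext phi (ext zeta l) = ext zeta (ext zeta l) := by
  induction l with
  | nil => rfl
  | cons a l ih =>
    rw [ext_cons, ext_append, ext_append, ih]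
    congr 1
    fin_cases a <;> rfl

/-- `φⁿ ∘ ζ = ζⁿ⁺¹` for all `n ≥ 0`. -/
theorem stmt_5 : ∀ n : ℕ, (ext phi)^[n] ∘ ext zeta = (ext zeta)^[n + 1] := by
  intro n
  induction n with
  | zero => rfl
  | succ n ih =>
    funext l
    calc ((ext phi)^[n + 1] ∘ ext zeta) l
        = (ext phi)^[n] (ext phi (ext zeta l)) := Function.iterate_succ_apply _ _ _
      _ = (ext phi)^[n] (ext zeta (ext zeta l)) := by rw [key]
      _ = ((ext phi)^[n] ∘ ext zeta) (ext zeta l) := rfl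
      _ = (ext zeta)^[n + 1] (ext zeta l) := congrFun ih _
      _ = (ext zeta)^[n + 1 + 1] l := (Function.iterate_succ_apply _ _ _).symm
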